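/- arXiv:1310.5873 — 2 statements merged into one kernel-verified Lean document; each statement's English description precedes it below -/
import Mathlib

section
/- Let ε = 0.001 and let n be sufficiently large with εn an integer. Let H be a maximal graph in 𝓕_n(2), i.e., a graph on n vertices with maximum degree at most 2 to which no edge can be added while keeping the maximum degree at most 2. Then W := V(H) admits a partition W = W_0 ∪ W_1 ∪ ⋯ ∪ W_6 with |W_0| = 4εn, |W_6| = 2εn, and |W_i| ≥ 2εn for i = 1,…,5, such that: (1) each of W_1,…,W_5 is 2-independent in H; (2) W_6 is 3-independent in H and every vertex of W_6 has degree exactly 2 in H; and (3) W_0 = N_H(W_6). -/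
/-- ε = 0.001 -/
noncomputable def eps : ℝ := 0.001

/-- A set `S` is `k`-independent in `H` if the distance in `H` between any two
distinct vertices of `S` is greater than `k` (distance between vertices in
different components being infinite). -/
def KIndep {α : Type*} (H : SimpleGraph α) (k : ℕ) (S : Finset α) : Prop :=
  ∀ x ∈ S, ∀ y ∈ S, x ≠ y → (k : ℕ∞) < H.edist x y

/-- `H` has maximum degree at most `2` and no edge can be added to `H` while
keeping the maximum degree at most `2`. -/
def MaximalDeg2 {α : Type*} (H : SimpleGraph α) : Prop :=
  (∀ v, (H.neighborSet v).ncard ≤ 2) ∧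
  ∀ a b : α, a ≠ b → ¬ H.Adj a b →
    ∃ v, 2 < (((H ⊔ SimpleGraph.fromEdgeSet {s(a, b)}).neighborSet v)).ncard

/-!
A maximal graph of maximum degree `2` has at most two vertices of degree less than `2`: any two
of them could be joined by a new edge, so they are already adjacent, and a third one would give
one of them degree `2`. When all degrees are at most `d`, the `k`-th power of the graph has
degrees below `(d + 1) ^ k` and its square has degrees at most `d ^ 2`, so greedy arguments apply.
`W₆` is a greedy independent set of `2εn` degree-`2` vertices in `H³`; its neighbourhood `W₀`
consists of `2 · 2εn` vertices because the neighbourhoods are pairwise disjoint. The rest is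
coloured properly in `H²` with five colours, so each colour class is `2`-independent. To make all
classes large, first pick a greedy independent set of `10εn` remaining vertices in `H²`, split it
into five blocks of `2εn`, give block `i` colour `i`, and extend greedily: a vertex has at most
four neighbours in `H²`, so one of five colours is always free.
-/

open Finset

lemma Finset.exists_le_card_fiber_of_card_eq_mul {V α : Type*} [Fintype α] [Nonempty α]
    [DecidableEq α] {T : Finset V} {m : ℕ} (hT : T.card = Fintype.card α * m) :
    ∃ f : V → α, ∀ a, m ≤ (T.filter (f · = a)).card := by
  classical
  obtain ⟨e⟩ : Nonempty (T ≃ α × Fin m) := Fintype.card_eq.1 (by simpa using hT)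
  let f : V → α := fun v => if h : v ∈ T then (e ⟨v, h⟩).1 else Classical.arbitrary α
  refine ⟨f, fun a => ?_⟩
  simpa using card_le_card_of_injOn (s := univ) (t := T.filter (f · = a))
    (fun i : Fin m => (e.symm (a, i) : V)) (fun i _ => by simp [f])
    (fun i _ j _ h => by simpa using Subtype.ext h)

namespace SimpleGraph

variable {V : Type*} (G : SimpleGraph V)

def power (k : ℕ) : SimpleGraph V where
  Adj x y := x ≠ y ∧ G.edist x y ≤ k
  symm := ⟨fun _ _ h => ⟨h.1.symm, G.edist_comm ▸ h.2⟩⟩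
  loopless := ⟨fun _ h => h.1 rfl⟩

noncomputable instance (k : ℕ) : DecidableRel (G.power k).Adj := Classical.decRel _

variable {G}

lemma power_adj {k : ℕ} {x y : V} : (G.power k).Adj x y ↔ x ≠ y ∧ G.edist x y ≤ k := Iff.rfl

lemma exists_adj_edist_le_of_edist_le_succ {u v : V} {k : ℕ} (huv : u ≠ v)
    (h : G.edist u v ≤ k + 1) : ∃ z, G.Adj u z ∧ G.edist z v ≤ k := by
  obtain ⟨p, hp⟩ := G.exists_walk_of_edist_ne_top (ne_top_of_le_ne_top (by simp) h)
  cases p with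
  | nil => exact absurd rfl huv
  | cons hadj q =>
    refine ⟨_, hadj, (edist_le q).trans ?_⟩
    rw [← hp, Walk.length_cons] at h
    have : q.length + 1 ≤ k + 1 := by exact_mod_cast h
    exact_mod_cast (by omega : q.length ≤ k)

lemma ncard_neighborSet_eq_degree [Fintype V] [DecidableRel G.Adj] (v : V) :
    (G.neighborSet v).ncard = G.degree v :=
  Set.ncard_eq_toFinset_card' _

variable [Fintype V] [DecidableEq V]

lemma mem_insert_neighborFinset_power {k : ℕ} {v x : V} :
    x ∈ insert v ((G.power k).neighborFinset v) ↔ G.edist v x ≤ k := by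
  rw [mem_insert, mem_neighborFinset, power_adj]
  rcases eq_or_ne x v with rfl | hxv
  · simp
  · simp [hxv, hxv.symm]

variable [DecidableRel G.Adj] {d : ℕ}

lemma degree_power_add_one_le (hd : ∀ v, G.degree v ≤ d) (k : ℕ) (v : V) :
    (G.power k).degree v + 1 ≤ (d + 1) ^ k := by
  induction k generalizing v with
  | zero =>
    suffices (G.power 0).neighborFinset v = ∅ by simp [← card_neighborFinset_eq_degree, this]
    ext x
    simp only [mem_neighborFinset, power_adj, CharP.cast_eq_zero, nonpos_iff_eq_zero,
      edist_eq_zero_iff, notMem_empty, iff_false]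
    exact fun h => h.1 h.2
  | succ k ih =>
    have hsub : insert v ((G.power (k + 1)).neighborFinset v) ⊆ insert v
        ((G.neighborFinset v).biUnion fun z => insert z ((G.power k).neighborFinset z)) := by
      intro x hx
      rw [mem_insert_neighborFinset_power] at hx
      rcases eq_or_ne v x with rfl | hvx
      · exact mem_insert_self _ _
      obtain ⟨z, hvz, hzx⟩ := exists_adj_edist_le_of_edist_le_succ hvx (by exact_mod_cast hx)
      exact mem_insert_of_mem (mem_biUnion.2 ⟨z, (mem_neighborFinset _ _ _).2 hvz,
        mem_insert_neighborFinset_power.2 hzx⟩)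
    have hv : v ∉ (G.power (k + 1)).neighborFinset v := by simp
    calc (G.power (k + 1)).degree v + 1
        = (insert v ((G.power (k + 1)).neighborFinset v)).card := by
          rw [card_insert_of_notMem hv, card_neighborFinset_eq_degree]
      _ ≤ 1 + G.degree v * (d + 1) ^ k := by
          refine (card_le_card hsub).trans ((card_insert_le _ _).trans ?_)
          rw [add_comm, ← card_neighborFinset_eq_degree]
          gcongr
          refine card_biUnion_le_card_mul _ _ _ fun z _ => (card_insert_le _ _).trans ?_
          rw [card_neighborFinset_eq_degree]
          exact ih z
      _ ≤ (d + 1) ^ (k + 1) := by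
          have := hd v
          rw [pow_succ]
          nlinarith [Nat.one_le_pow k (d + 1) (by omega)]

lemma degree_power_two_le (hd : ∀ v, G.degree v ≤ d) (v : V) : (G.power 2).degree v ≤ d ^ 2 := by
  have hsub : (G.power 2).neighborFinset v ⊆
      (G.neighborFinset v).biUnion fun z => insert z ((G.neighborFinset z).erase v) := by
    intro x hx
    obtain ⟨hvx, hx⟩ := (mem_neighborFinset _ _ _).1 hx
    obtain ⟨z, hvz, hzx⟩ := exists_adj_edist_le_of_edist_le_succ hvx (by exact_mod_cast hx)
    refine mem_biUnion.2 ⟨z, (mem_neighborFinset _ _ _).2 hvz, ?_⟩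
    rcases edist_le_one_iff_adj_or_eq.1 (by exact_mod_cast hzx) with hzx | rfl
    · exact mem_insert_of_mem (mem_erase.2 ⟨hvx.symm, (mem_neighborFinset _ _ _).2 hzx⟩)
    · exact mem_insert_self _ _
  have hterm : ∀ z ∈ G.neighborFinset v, (insert z ((G.neighborFinset z).erase v)).card ≤ d := by
    intro z hz
    have hvz : v ∈ G.neighborFinset z :=
      (mem_neighborFinset _ _ _).2 ((mem_neighborFinset _ _ _).1 hz).symm
    have := card_erase_add_one hvz
    rw [card_neighborFinset_eq_degree] at this
    have := hd z
    exact (card_insert_le _ _).trans (by omega)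
  calc (G.power 2).degree v ≤ G.degree v * d := by
        rw [← card_neighborFinset_eq_degree, ← card_neighborFinset_eq_degree G]
        exact (card_le_card hsub).trans (card_biUnion_le_card_mul _ _ _ hterm)
    _ ≤ d ^ 2 := by rw [sq]; exact Nat.mul_le_mul_right _ (hd v)

lemma exists_isIndepSet_subset_card_eq {c : ℕ} (hc : ∀ v, G.degree v < c) {D : Finset V} :
    ∀ {m : ℕ}, m * c < D.card → ∃ S ⊆ D, S.card = m ∧ G.IsIndepSet S
  | 0, _ => ⟨∅, empty_subset _, card_empty, by simp⟩
  | m + 1, hm => by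
    obtain ⟨S, hSD, hS, hSind⟩ := exists_isIndepSet_subset_card_eq hc (m := m) (by nlinarith)
    set blocked := S.biUnion fun w => insert w (G.neighborFinset w)
    have hblocked : blocked.card ≤ m * c := by
      rw [← hS]
      refine card_biUnion_le_card_mul _ _ _ fun w _ => (card_insert_le _ _).trans ?_
      rw [card_neighborFinset_eq_degree]
      exact hc w
    obtain ⟨v, hvD, hvb⟩ : ∃ v ∈ D, v ∉ blocked :=
      exists_mem_notMem_of_card_lt_card (by nlinarith)
    have hfree : ∀ w ∈ S, w ≠ v ∧ ¬G.Adj w v := fun w hw =>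
      ⟨fun h => hvb (mem_biUnion.2 ⟨w, hw, h ▸ mem_insert_self _ _⟩),
        fun h => hvb (mem_biUnion.2 ⟨w, hw, mem_insert_of_mem ((mem_neighborFinset _ _ _).2 h)⟩)⟩
    refine ⟨insert v S, insert_subset hvD hSD, ?_, ?_⟩
    · rw [card_insert_of_notMem fun hv => (hfree v hv).1 rfl, hS]
    · rw [coe_insert]
      exact Set.pairwise_insert.2 ⟨hSind, fun w hw _ =>
        ⟨fun h => (hfree w hw).2 h.symm, fun h => (hfree w hw).2 h⟩⟩

lemma exists_coloring_extend {α : Type*} [Fintype α] (hdeg : ∀ v, G.degree v < Fintype.card α)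
    {T : Finset V} (hT : G.IsIndepSet T) (f : V → α) :
    ∃ C : G.Coloring α, ∀ t ∈ T, C t = f t := by
  classical
  suffices ∀ S : Finset V, ∃ c : V → α, (∀ t ∈ T, c t = f t) ∧
      ∀ x ∈ S ∪ T, ∀ y ∈ S ∪ T, G.Adj x y → c x ≠ c y by
    obtain ⟨c, hcT, hc⟩ := this univ
    exact ⟨Coloring.mk c fun {x y} h => hc x (by simp) y (by simp) h, hcT⟩
  intro S
  induction S using Finset.induction_on with
  | empty =>
    exact ⟨f, fun _ _ => rfl, fun x hx y hy h _ =>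
      hT (by simpa using hx) (by simpa using hy) h.ne h⟩
  | insert v S _ ih =>
    obtain ⟨c, hcT, hc⟩ := ih
    by_cases hvT : v ∈ T
    · refine ⟨c, hcT, fun x hx y hy => hc x ?_ y ?_⟩ <;> grind
    obtain ⟨a, ha⟩ : ∃ a, a ∉ (G.neighborFinset v).image c := by
      by_contra! h
      have := (card_le_card (s := univ) fun a _ => h a).trans card_image_le
      rw [card_univ, card_neighborFinset_eq_degree] at this
      exact (hdeg v).not_ge this
    have hnew : ∀ y, G.Adj v y → a ≠ c y := fun y h hy =>
      ha (mem_image.2 ⟨y, (mem_neighborFinset _ _ _).2 h, hy.symm⟩)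
    refine ⟨Function.update c v a, fun t ht => ?_, fun x hx y hy h => ?_⟩
    · rw [Function.update_of_ne (by rintro rfl; exact hvT ht), hcT t ht]
    rcases eq_or_ne x v with rfl | hxv
    · rw [Function.update_self, Function.update_of_ne h.ne.symm]
      exact hnew y h
    rcases eq_or_ne y v with rfl | hyv
    · rw [Function.update_self, Function.update_of_ne hxv]
      exact (hnew x h.symm).symm
    rw [Function.update_of_ne hxv, Function.update_of_ne hyv]
    exact hc x (by grind) y (by grind) h

lemma exists_coloring_le_card_filter {α : Type*} [Fintype α] [DecidableEq α]
    (hdeg : ∀ v, G.degree v < Fintype.card α) {R : Finset V} {m : ℕ}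
    (hR : Fintype.card α * m * Fintype.card α < R.card) :
    ∃ C : G.Coloring α, ∀ a, m ≤ (R.filter (C · = a)).card := by
  obtain ⟨v, -⟩ := card_pos.1 (pos_of_gt hR)
  have : Nonempty α := Fintype.card_pos_iff.1 (pos_of_gt (hdeg v))
  obtain ⟨T, hTR, hTcard, hT⟩ := exists_isIndepSet_subset_card_eq hdeg hR
  obtain ⟨f, hf⟩ := exists_le_card_fiber_of_card_eq_mul hTcard
  obtain ⟨C, hC⟩ := exists_coloring_extend hdeg hT f
  refine ⟨C, fun a => (hf a).trans (card_le_card fun t ht => ?_)⟩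
  rw [mem_filter] at ht ⊢
  exact ⟨hTR ht.1, (hC t ht.1).trans ht.2⟩

end SimpleGraph

open SimpleGraph

section KIndep

variable {V : Type*} {H : SimpleGraph V}

lemma KIndep.of_le {k l : ℕ} {S : Finset V} (hS : KIndep H l S) (hkl : k ≤ l) : KIndep H k S :=
  fun x hx y hy hxy => lt_of_le_of_lt (by exact_mod_cast hkl) (hS x hx y hy hxy)

lemma kIndep_iff_isIndepSet_power {k : ℕ} {S : Finset V} :
    KIndep H k S ↔ (H.power k).IsIndepSet S := by
  simp only [KIndep, IsIndepSet, Set.Pairwise, mem_coe, power_adj, not_and, not_le]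
  exact ⟨fun h x hx y hy hxy _ => h x hx y hy hxy, fun h x hx y hy hxy => h hx hy hxy hxy⟩

variable [Fintype V] [DecidableEq V] [DecidableRel H.Adj]

lemma KIndep.card_biUnion_neighborFinset {S : Finset V} (hS : KIndep H 2 S) :
    (S.biUnion fun v => H.neighborFinset v).card = ∑ v ∈ S, H.degree v := by
  rw [card_biUnion fun x hx y hy hxy => disjoint_left.2 fun u hxu hyu => ?_]
  · simp only [card_neighborFinset_eq_degree]
  rw [mem_neighborFinset] at hxu hyu
  refine (hS x hx y hy hxy).not_ge ((H.edist_triangle (v := u)).trans ?_)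
  rw [edist_eq_one_iff_adj.2 hxu, edist_eq_one_iff_adj.2 hyu.symm]
  norm_num

lemma KIndep.disjoint_biUnion_neighborFinset {S : Finset V} (hS : KIndep H 1 S) :
    Disjoint (S.biUnion fun v => H.neighborFinset v) S := by
  refine disjoint_left.2 fun u hu huS => ?_
  obtain ⟨w, hw, hwu⟩ := mem_biUnion.1 hu
  rw [mem_neighborFinset] at hwu
  exact (hS w hw u huS hwu.ne).ne (edist_eq_one_iff_adj.2 hwu).symm

end KIndep

section MaximalDeg2

variable {V : Type*} {H : SimpleGraph V} [Fintype V] [DecidableRel H.Adj]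

lemma MaximalDeg2.degree_le_two (hH : MaximalDeg2 H) (v : V) : H.degree v ≤ 2 :=
  ncard_neighborSet_eq_degree (G := H) v ▸ hH.1 v

lemma MaximalDeg2.adj_of_degree_lt_two (hH : MaximalDeg2 H) {a b : V} (hab : a ≠ b)
    (ha : H.degree a < 2) (hb : H.degree b < 2) : H.Adj a b := by
  classical
  by_contra hnab
  obtain ⟨v, hv⟩ := hH.2 a b hab hnab
  refine hv.not_ge ?_
  change ((H ⊔ edge a b).neighborSet v).ncard ≤ 2
  rw [neighborSet_sup]
  refine (Set.ncard_union_le _ _).trans ?_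
  rw [ncard_neighborSet_eq_degree]
  by_cases hv : v = a ∨ v = b
  · have : ((edge a b).neighborSet v).ncard ≤ 1 :=
      (Set.ncard_le_one (Set.toFinite _)).2 fun x hx y hy => by
        simp only [mem_neighborSet, edge_adj] at hx hy
        grind
    rcases hv with rfl | rfl <;> omega
  · have : (edge a b).neighborSet v = ∅ := by
      ext
      simp only [mem_neighborSet, edge_adj, Set.mem_empty_iff_false, iff_false]
      grind
    simpa [this] using hH.degree_le_two v

lemma MaximalDeg2.card_le_card_filter_degree_eq_two_add_two [DecidableEq V]
    (hH : MaximalDeg2 H) :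
    Fintype.card V ≤ (univ.filter (H.degree · = 2)).card + 2 := by
  have hlow : (univ.filter (H.degree · < 2)).card ≤ 2 := by
    by_contra! h
    obtain ⟨a, ha, b, hb, c, hc, hab, hac, hbc⟩ := two_lt_card.1 h
    simp only [mem_filter, mem_univ, true_and] at ha hb hc
    have hsub : {b, c} ⊆ H.neighborFinset a := by
      simp [insert_subset_iff, hH.adj_of_degree_lt_two hab ha hb, hH.adj_of_degree_lt_two hac ha hc]
    have := card_le_card hsub
    rw [card_pair hbc, card_neighborFinset_eq_degree] at this
    omega
  calc Fintype.card V = (univ : Finset V).card := card_univ.symm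
    _ ≤ (univ.filter (H.degree · = 2) ∪ univ.filter (H.degree · < 2)).card :=
        card_le_card fun v _ => by have := hH.degree_le_two v; simp; omega
    _ ≤ _ := (card_union_le _ _).trans (by omega)

end MaximalDeg2

lemma exists_partition_of_labelling {V ι : Type*} [Fintype V] [DecidableEq V] [Fintype ι]
    [DecidableEq ι] {i₀ i₁ : ι} (h₀₁ : i₀ ≠ i₁) {A B : Finset V} (hAB : Disjoint A B)
    (c : V → {i : ι // i ≠ i₀ ∧ i ≠ i₁}) :
    ∃ W : ι → Finset V, (∀ i j, i ≠ j → Disjoint (W i) (W j)) ∧ univ.biUnion W = univ ∧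
      W i₀ = A ∧ W i₁ = B ∧ ∀ i (h : i ≠ i₀ ∧ i ≠ i₁), W i = (A ∪ B)ᶜ.filter (c · = ⟨i, h⟩) := by
  let label : V → ι := fun v => if v ∈ A then i₀ else if v ∈ B then i₁ else c v
  refine ⟨fun i => univ.filter (label · = i), fun i j hij => disjoint_filter.2 fun _ _ hi hj =>
    hij (hi.symm.trans hj), by ext; simp, ?_, ?_, fun i h => ?_⟩
  all_goals
    ext v
    have := (c v).2
    have : v ∈ A → v ∉ B := fun h => disjoint_left.1 hAB h
    simp only [mem_filter, mem_univ, true_and, label, mem_compl, mem_union, Subtype.ext_iff]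
    grind

theorem stmt3 :
    ∃ n₀ : ℕ, ∀ n ≥ n₀, 1000 ∣ n →
      ∀ H : SimpleGraph (Fin n), MaximalDeg2 H →
        ∃ W : Fin 7 → Finset (Fin n),
          (∀ i j : Fin 7, i ≠ j → Disjoint (W i) (W j)) ∧
          (Finset.univ.biUnion W = Finset.univ) ∧
          ((W 0).card : ℝ) = 4 * eps * n ∧
          ((W 6).card : ℝ) = 2 * eps * n ∧
          (∀ i : Fin 7, i ≠ 0 → i ≠ 6 → 2 * eps * n ≤ ((W i).card : ℝ)) ∧
          (∀ i : Fin 7, i ≠ 0 → i ≠ 6 → KIndep H 2 (W i)) ∧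
          KIndep H 3 (W 6) ∧
          (∀ w ∈ W 6, (H.neighborSet w).ncard = 2) ∧
          ((W 0 : Set (Fin n)) = {v | ∃ w ∈ W 6, H.Adj w v}) := by
  classical
  refine ⟨1000, fun n hn ⟨m, hm⟩ H hH => ?_⟩
  subst hm
  have hε : eps * ((1000 * m : ℕ) : ℝ) = m := by rw [eps]; push_cast; ring
  have hD := hH.card_le_card_filter_degree_eq_two_add_two
  rw [Fintype.card_fin] at hD
  obtain ⟨W6, hW6D, hW6card, hW6⟩ := exists_isIndepSet_subset_card_eq (G := H.power 3) (c := 27)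
    (fun v => Nat.lt_of_succ_le (degree_power_add_one_le hH.degree_le_two 3 v))
    (D := univ.filter (H.degree · = 2)) (m := 2 * m) (by omega)
  rw [← kIndep_iff_isIndepSet_power] at hW6
  have hW6deg : ∀ w ∈ W6, H.degree w = 2 := fun w hw => (mem_filter.1 (hW6D hw)).2
  set W0 := W6.biUnion fun v => H.neighborFinset v
  have hW0card : W0.card = 4 * m := by
    rw [(hW6.of_le (by norm_num)).card_biUnion_neighborFinset, sum_congr rfl hW6deg, sum_const,
      hW6card, smul_eq_mul]
    ring
  have hdisj := (hW6.of_le (by norm_num)).disjoint_biUnion_neighborFinset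
  have hcolors : Fintype.card {i : Fin 7 // i ≠ 0 ∧ i ≠ 6} = 5 := by decide
  obtain ⟨C, hC⟩ := exists_coloring_le_card_filter (G := H.power 2)
    (α := {i : Fin 7 // i ≠ 0 ∧ i ≠ 6}) (R := (W0 ∪ W6)ᶜ) (m := 2 * m)
    (fun v => (degree_power_two_le hH.degree_le_two v).trans_lt (by omega))
    (by rw [card_compl, card_union_of_disjoint hdisj, hW0card, hW6card, hcolors,
      Fintype.card_fin]; omega)
  obtain ⟨W, hWdisj, hWcover, hW0, hW6', hWmid⟩ :=
    exists_partition_of_labelling (by decide : (0 : Fin 7) ≠ 6) hdisj C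
  refine ⟨W, hWdisj, hWcover, ?_, ?_, fun i h0 h6 => ?_, fun i h0 h6 => ?_, hW6' ▸ hW6,
    fun w hw => ?_, ?_⟩
  · rw [hW0, hW0card, mul_assoc, hε]; push_cast; ring
  · rw [hW6', hW6card, mul_assoc, hε]; push_cast; ring
  · rw [mul_assoc, hε, hWmid i ⟨h0, h6⟩]
    exact_mod_cast hC _
  · rw [hWmid i ⟨h0, h6⟩]
    exact kIndep_iff_isIndepSet_power.2
      ((C.isIndepSet_colorClass _).mono fun v hv => (mem_filter.1 (mem_coe.1 hv)).2)
  · rw [ncard_neighborSet_eq_degree]; exact hW6deg w (hW6' ▸ hw)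
  · ext v; simp [hW0, hW6']
end

section
/- Let H be a graph on n vertices with maximum degree at most 2. Then there exists a set S ⊆ V(H) with |S| ≥ n/7 such that S is 3-independent in H, i.e., the distance in H between every two distinct vertices of S is greater than 3. -/
/-!
Greedy selection: take any vertex, discard every vertex within distance 3 of it, and recurse.
In a graph of maximum degree 2, a vertex at distance `r + 1` from `c` has a neighbour at
distance `r`, hence at most one neighbour at distance `r + 2`. So each sphere of positive radius
around `c` has at most two vertices, the closed ball of radius 3 has at most 7, and every chosen
vertex accounts for at most 7 discarded ones.
-/

open Finset

namespace SimpleGraph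

variable {V : Type*} {G : SimpleGraph V}

def sphere (G : SimpleGraph V) (c : V) (r : ℕ∞) : Set V :=
  {v | G.edist v c = r}

@[simp]
theorem mem_sphere {c v : V} {r : ℕ∞} : v ∈ G.sphere c r ↔ G.edist v c = r := .rfl

theorem ball_add_one {c : V} {r : ℕ∞} (hr : r ≠ ⊤) :
    G.ball c (r + 1) = G.ball c r ∪ G.sphere c r := by
  ext v
  simp [ENat.lt_add_one_iff hr, le_iff_lt_or_eq]

theorem exists_adj_edist_eq_of_edist_eq_add_one {v c : V} {r : ℕ}
    (h : G.edist v c = r + 1) : ∃ u, G.Adj v u ∧ G.edist u c = r := by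
  obtain ⟨p, hp⟩ := exists_walk_of_edist_eq_coe (k := r + 1) (by exact_mod_cast h)
  cases p with
  | nil => simp at hp
  | @cons _ u _ hvu q =>
    refine ⟨u, hvu, le_antisymm ?_ ?_⟩
    · simpa [Walk.length_cons, add_left_inj] using q.edist_le.trans_eq (by simp_all)
    · have := (G.edist_triangle (u := v) (v := u) (w := c)).trans_eq
        (by rw [edist_eq_one_iff_adj.mpr hvu, add_comm])
      rwa [h, ENat.add_le_add_iff_right ENat.one_ne_top] at this

variable [Finite V]

theorem subsingleton_neighborSet_diff_singleton (hdeg : ∀ v, (G.neighborSet v).ncard ≤ 2)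
    {u x : V} (hx : G.Adj u x) : (G.neighborSet u \ {x}).Subsingleton := by
  rw [← Set.ncard_le_one_iff_subsingleton,
    Set.ncard_sdiff_singleton_of_mem ((G.mem_neighborSet u x).mpr hx)]
  have := hdeg u
  omega

theorem ncard_sphere_add_two_le (hdeg : ∀ v, (G.neighborSet v).ncard ≤ 2) (c : V)
    (r : ℕ) : (G.sphere c (r + 2)).ncard ≤ (G.sphere c (r + 1)).ncard := by
  classical
  have := Fintype.ofFinite V
  rw [Set.ncard_eq_toFinset_card', Set.ncard_eq_toFinset_card']
  refine Finset.card_le_card_of_forall_subsingleton G.Adj (fun w hw => ?_) (fun u hu => ?_)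
  · simp only [Set.mem_toFinset, mem_sphere] at hw ⊢
    obtain ⟨u, hwu, hu⟩ :=
      exists_adj_edist_eq_of_edist_eq_add_one (r := r + 1) (by rw [hw]; push_cast; ring)
    exact ⟨u, by exact_mod_cast hu, hwu⟩
  · simp only [Set.mem_toFinset, mem_sphere] at hu
    obtain ⟨x, hux, hx⟩ := exists_adj_edist_eq_of_edist_eq_add_one hu
    refine (subsingleton_neighborSet_diff_singleton hdeg hux).anti fun w ⟨hw, hwu⟩ => ?_
    simp only [Set.mem_toFinset, mem_sphere] at hw
    refine ⟨hwu.symm, fun hwx => ?_⟩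
    rw [Set.mem_singleton_iff.mp hwx, hx] at hw
    exact absurd hw (by norm_cast; omega)

theorem ncard_sphere_add_one_le_two (hdeg : ∀ v, (G.neighborSet v).ncard ≤ 2) (c : V)
    (r : ℕ) : (G.sphere c (r + 1)).ncard ≤ 2 := by
  induction r with
  | zero =>
    convert hdeg c using 2
    ext v
    simp [edist_comm]
  | succ r ih =>
    push_cast
    rw [add_assoc, one_add_one_eq_two]
    exact (ncard_sphere_add_two_le hdeg c r).trans ih

theorem ncard_ball_le (hdeg : ∀ v, (G.neighborSet v).ncard ≤ 2) (c : V) (r : ℕ) :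
    (G.ball c (r + 1)).ncard ≤ 2 * r + 1 := by
  induction r with
  | zero => simp
  | succ r ih =>
    rw [Nat.cast_succ, ball_add_one (by simp)]
    exact (Set.ncard_union_le _ _).trans (by have := ncard_sphere_add_one_le_two hdeg c r; omega)

end SimpleGraph

theorem KIndep.insert {α : Type*} [DecidableEq α] {G : SimpleGraph α} {k : ℕ} {S : Finset α}
    {v : α} (hS : KIndep G k S) (hv : ∀ y ∈ S, (k : ℕ∞) < G.edist v y) :
    KIndep G k (insert v S) := by
  intro x hx y hy hxy
  rcases mem_insert.mp hx with rfl | hxS <;> rcases mem_insert.mp hy with rfl | hyS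
  · exact absurd rfl hxy
  · exact hv y hyS
  · exact G.edist_comm ▸ hv x hxS
  · exact hS x hxS y hyS hxy

theorem exists_kIndep_subset_card_le_mul {V : Type*} [Finite V] (G : SimpleGraph V) (k m : ℕ)
    -- `G.ball` is the open ball, so this is the closed ball of radius `k`.
    (hball : ∀ c, (G.ball c (k + 1)).ncard ≤ m) (T : Finset V) :
    ∃ S ⊆ T, KIndep G k S ∧ #T ≤ m * #S := by
  classical
  induction T using Finset.strongInduction with
  | H T ih =>
  obtain rfl | ⟨v, hv⟩ := T.eq_empty_or_nonempty
  · exact ⟨∅, subset_rfl, by simp [KIndep], by simp⟩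
  set far := T.filter fun u => (k : ℕ∞) < G.edist v u
  have hfar : far ⊂ T := filter_ssubset.mpr ⟨v, hv, by simp⟩
  obtain ⟨S, hST, hS, hcard⟩ := ih far hfar
  have hvS : v ∉ S := fun h => by simpa using (mem_filter.mp (hST h)).2
  have hnear : #(T.filter fun u => ¬ (k : ℕ∞) < G.edist v u) ≤ m := by
    rw [← Set.ncard_coe_finset]
    refine le_trans (Set.ncard_le_ncard (fun u hu => ?_) (Set.toFinite _)) (hball v)
    simp only [coe_filter, not_lt, Set.mem_ofPred_eq] at hu
    simpa [G.edist_comm (u := u), ENat.lt_natCast_add_one_iff] using hu.2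
  refine ⟨insert v S, insert_subset hv (hST.trans (filter_subset _ _)),
    hS.insert fun y hy => (mem_filter.mp (hST hy)).2, ?_⟩
  rw [card_insert_of_notMem hvS, ← card_filter_add_card_filter_not
    (fun u => (k : ℕ∞) < G.edist v u)]
  linarith

theorem stmt11 (n : ℕ) (H : SimpleGraph (Fin n))
    (hdeg : ∀ v, (H.neighborSet v).ncard ≤ 2) :
    ∃ S : Finset (Fin n), (n : ℝ) / 7 ≤ (S.card : ℝ) ∧ KIndep H 3 S := by
  obtain ⟨S, -, hS, hcard⟩ :=
    exists_kIndep_subset_card_le_mul H 3 7 (fun c => SimpleGraph.ncard_ball_le hdeg c 3) univ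
  refine ⟨S, ?_, hS⟩
  rw [card_univ, Fintype.card_fin] at hcard
  rw [div_le_iff₀ (by norm_num)]
  exact_mod_cast hcard.trans_eq (mul_comm _ _)
end
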